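/- Suppose [2N] is divided into k ≥ 2 non-empty consecutive intervals S₁,...,S_k, and let σ be a non-crossing partition of [2N] into pairs such that no pair of σ connects two elements of the same interval Sᵢ. Define Q(π), for any non-crossing partition π of [2N] with all blocks of even size, to be the non-crossing pair partition obtained by replacing each block {k₁ < k₂ < ... < k_{2p}} of π by the pairs {k₁,k₂}, {k₃,k₄}, ..., {k_{2p−1},k_{2p}}. Then the number of non-crossing partitions π of [2N] (with blocks of even size) that connect no two elements of a same interval Sᵢ and satisfy Q(π) = σ is at most 4^{k−2}; moreover, for every such π, at most 2k − 4 elements of [2N] lie in a block of π that is not a pair. -/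

import Mathlib

/-!
Call a point inner if its block of `π` has points on both sides of it. In a non-crossing `π`
whose blocks never meet an interval twice, two inner points of one interval would be joined across
each other, and no inner point lies in the first or the last interval; so there are at most
`k - 2` inner points. A block of size `2p ≥ 4` has `2p - 2 ≥ p` of them, whence the bound `2k - 4`.

For `π` in the fibre of `σ`, the parity of the rank of a point in its block says whether it is the
left end of its pair in `σ`, so it does not depend on `π`. The same crossing argument shows that an
inner point is determined by its interval and this parity, so the set of inner points is
determined by a subset of (middle intervals) × (parities), of which there are `4 ^ (k - 2)`.
Finally the set of inner points determines `π`: a point of even rank is joined to its partner in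
`σ`, and a point of odd rank to the inner point matched with it when inner points are read as
brackets.
-/

open Classical

/-- `i` and `j` lie in the same block of the partition `P`. -/
def SameBlock {N : ℕ} (P : Finpartition (Finset.univ : Finset (Fin N))) (i j : Fin N) : Prop :=
  ∃ b ∈ P.parts, i ∈ b ∧ j ∈ b

/-- A partition of `[N]` is non-crossing (for the linear order): for
`i < j < k < l`, `i ∼ k` and `j ∼ l` imply `i ∼ j`. -/
def IsNonCrossing {N : ℕ} (P : Finpartition (Finset.univ : Finset (Fin N))) : Prop :=
  ∀ i j k l : Fin N, i < j → j < k → k < l →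
    SameBlock P i k → SameBlock P j l → SameBlock P i j

/-- `Q(π) = σ`: `σ` is obtained from `π` (a non-crossing partition with blocks of even
size) by replacing each block `{k₁ < k₂ < ... < k_{2p}}` by the pairs
`{k₁,k₂}, {k₃,k₄}, ..., {k_{2p−1},k_{2p}}`.  Equivalently, for `i < j`: `{i,j}` is a
pair of `σ` iff `j` is the successor of `i` in its `π`-block and the number of elements
of that block below `i` is even. -/
def QEq {N : ℕ} (π σ : Finpartition (Finset.univ : Finset (Fin N))) : Prop :=
  ∀ i j : Fin N, i < j →
    (SameBlock σ i j ↔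
      (SameBlock π i j ∧ (∀ x, i < x → x < j → ¬ SameBlock π i x) ∧
        Even ((Finset.univ.filter (fun x => SameBlock π i x ∧ x < i)).card)))

open Finset

variable {n k : ℕ}

section Blocks

variable {P : Finpartition (univ : Finset (Fin n))} {x y z : Fin n}

theorem SameBlock.refl (P : Finpartition (univ : Finset (Fin n))) (x : Fin n) :
    SameBlock P x x := by
  obtain ⟨b, hb, hx⟩ := P.exists_mem (mem_univ x)
  exact ⟨b, hb, hx, hx⟩

theorem SameBlock.symm (h : SameBlock P x y) : SameBlock P y x := by
  obtain ⟨b, hb, hx, hy⟩ := h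
  exact ⟨b, hb, hy, hx⟩

theorem SameBlock.trans (h : SameBlock P x y) (h' : SameBlock P y z) : SameBlock P x z := by
  obtain ⟨b, hb, hx, hy⟩ := h
  obtain ⟨c, hc, hy', hz⟩ := h'
  obtain rfl := P.eq_of_mem_parts hb hc hy hy'
  exact ⟨b, hb, hx, hz⟩

theorem Finpartition.parts_subset_of_sameBlock_iff {P P' : Finpartition (univ : Finset (Fin n))}
    (h : ∀ x y, SameBlock P x y ↔ SameBlock P' x y) : P.parts ⊆ P'.parts := by
  intro b hb
  obtain ⟨x, hx⟩ := P.nonempty_of_mem_parts hb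
  have hpart : P.part x = P'.part x := by
    ext y
    simp only [Finpartition.mem_part_iff_exists]
    exact h y x
  rw [← P.part_eq_of_mem hb hx, hpart]
  exact P'.part_mem.2 (mem_univ x)

theorem Finpartition.eq_of_sameBlock_iff {P P' : Finpartition (univ : Finset (Fin n))}
    (h : ∀ x y, SameBlock P x y ↔ SameBlock P' x y) : P = P' :=
  Finpartition.ext <| (parts_subset_of_sameBlock_iff h).antisymm
    (parts_subset_of_sameBlock_iff fun x y => (h x y).symm)

def IsBlockSucc (P : Finpartition (univ : Finset (Fin n))) (x y : Fin n) : Prop :=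
  SameBlock P x y ∧ x < y ∧ ∀ z, x < z → z < y → ¬ SameBlock P x z

noncomputable def blockRank (P : Finpartition (univ : Finset (Fin n))) (x : Fin n) : ℕ :=
  #(univ.filter fun y => SameBlock P x y ∧ y < x)

noncomputable def innerPoints (P : Finpartition (univ : Finset (Fin n))) : Finset (Fin n) :=
  univ.filter fun x => (∃ u, SameBlock P x u ∧ u < x) ∧ ∃ v, SameBlock P x v ∧ x < v

theorem mem_innerPoints :
    x ∈ innerPoints P ↔ (∃ u, SameBlock P x u ∧ u < x) ∧ ∃ v, SameBlock P x v ∧ x < v := by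
  simp [innerPoints]

theorem exists_isBlockSucc_of_sameBlock_of_lt (h : SameBlock P x y) (hxy : x < y) :
    ∃ z, IsBlockSucc P x z := by
  have hne : (univ.filter fun v => SameBlock P x v ∧ x < v).Nonempty := ⟨y, by simp [h, hxy]⟩
  obtain ⟨hz, hxz⟩ := (mem_filter.1 ((univ.filter _).min'_mem hne)).2
  refine ⟨_, hz, hxz, fun v hxv hvz hv => ?_⟩
  exact (hvz.trans_le ((univ.filter _).min'_le v (by simp [hv, hxv]))).false

theorem exists_isBlockSucc_of_sameBlock_of_gt (h : SameBlock P x y) (hyx : y < x) :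
    ∃ e, IsBlockSucc P e x := by
  have hne : (univ.filter fun u => SameBlock P x u ∧ u < x).Nonempty := ⟨y, by simp [h, hyx]⟩
  obtain ⟨he, hex⟩ := (mem_filter.1 ((univ.filter _).max'_mem hne)).2
  refine ⟨_, he.symm, hex, fun v hev hvx hv => ?_⟩
  exact (hev.trans_le ((univ.filter _).le_max' v (by simp [he.trans hv, hvx]))).false

theorem IsBlockSucc.le_of_sameBlock (h : IsBlockSucc P x y) (hz : SameBlock P y z) (hzy : z < y) :
    z ≤ x := by
  by_contra! hxz
  exact h.2.2 z hxz hzy (h.1.trans hz)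

theorem IsBlockSucc.blockRank_eq (h : IsBlockSucc P x y) : blockRank P y = blockRank P x + 1 := by
  have hbelow : (univ.filter fun v => SameBlock P y v ∧ v < y) =
      insert x (univ.filter fun v => SameBlock P x v ∧ v < x) := by
    ext v
    simp only [mem_filter, mem_univ, true_and, mem_insert]
    constructor
    · rintro ⟨hv, hvy⟩
      rcases lt_trichotomy v x with hvx | rfl | hxv
      · exact Or.inr ⟨h.1.trans hv, hvx⟩
      · exact Or.inl rfl
      · exact absurd (h.1.trans hv) (h.2.2 v hxv hvy)
    · rintro (rfl | ⟨hv, hvx⟩)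
      · exact ⟨h.1.symm, h.2.1⟩
      · exact ⟨h.1.symm.trans hv, hvx.trans h.2.1⟩
  rw [blockRank, hbelow, card_insert_of_notMem (by simp)]
  rfl

theorem blockRank_pos_iff : 0 < blockRank P x ↔ ∃ u, SameBlock P x u ∧ u < x := by
  simp [blockRank, card_pos, filter_nonempty_iff]

/-- The last element of a block has rank `#block - 1`, which is odd when the block is even. -/
theorem exists_sameBlock_gt_of_even_blockRank (heven : ∀ b ∈ P.parts, Even b.card)
    (h : Even (blockRank P x)) : ∃ v, SameBlock P x v ∧ x < v := by
  by_contra! hlast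
  obtain ⟨b, hb, hxb⟩ := P.exists_mem (mem_univ x)
  have hblock : b = insert x (univ.filter fun v => SameBlock P x v ∧ v < x) := by
    ext v
    simp only [mem_filter, mem_univ, true_and, mem_insert]
    have hv : v ∈ b ↔ SameBlock P x v :=
      ⟨fun hv => ⟨b, hb, hxb, hv⟩, fun ⟨c, hc, hxc, hvc⟩ => P.eq_of_mem_parts hc hb hxc hxb ▸ hvc⟩
    rw [hv]
    rcases lt_trichotomy v x with hvx | rfl | hxv
    · simp [hvx, hvx.ne]
    · simp [SameBlock.refl]
    · simpa [hxv.ne', hxv.not_gt] using fun h => (hlast v h).not_gt hxv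
  have := heven b hb
  rw [hblock, card_insert_of_notMem (by simp), Nat.even_add_one] at this
  exact this h

end Blocks

section Crossing

variable {P : Finpartition (univ : Finset (Fin n))} {x y z w : Fin n}

theorem IsNonCrossing.lt_and_lt_of_isBlockSucc (hnc : IsNonCrossing P) (hxy : IsBlockSucc P x y)
    (hxz : x < z) (hzy : z < y) (hzw : SameBlock P z w) : x < w ∧ w < y := by
  obtain ⟨hsb, -, hgap⟩ := hxy
  have hxz' : ¬ SameBlock P x z := hgap z hxz hzy
  refine ⟨lt_of_not_ge fun hwx => ?_, lt_of_not_ge fun hyw => ?_⟩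
  · rcases hwx.lt_or_eq with hwx | rfl
    · exact hxz' ((hnc w x z y hwx hxz hzy hzw.symm hsb).symm.trans hzw.symm)
    · exact hxz' hzw.symm
  · rcases hyw.lt_or_eq with hyw | rfl
    · exact hxz' (hnc x z y w hxz hzy hyw hsb hzw)
    · exact hxz' (hsb.trans hzw.symm)

end Crossing

section Coloring

variable {P : Finpartition (univ : Finset (Fin n))} {f : Fin n → Fin k} {x x' y u : Fin n}

def SeparatesColors (P : Finpartition (univ : Finset (Fin n))) (f : Fin n → Fin k) : Prop :=
  ∀ i j, i ≠ j → SameBlock P i j → f i ≠ f j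

theorem SeparatesColors.lt (hsep : SeparatesColors P f) (hf : Monotone f) (h : SameBlock P x y)
    (hxy : x < y) : f x < f y :=
  (hf hxy.le).lt_of_ne (hsep x y hxy.ne h)

/-- The far ends of both links leave the interval of `x` and `x'`, so the links would cross. -/
theorem IsNonCrossing.false_of_sameBlock_gt_of_sameBlock_lt (hnc : IsNonCrossing P)
    (hsep : SeparatesColors P f) (hf : Monotone f) (hxx' : x < x') (hcol : f x = f x')
    (hy : SameBlock P x y) (hxy : x < y) (hu : SameBlock P x' u) (hux' : u < x') : False := by
  have hx'y : x' < y := lt_of_not_ge fun hyx' => (hsep.lt hf hy hxy).not_ge (hcol ▸ hf hyx')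
  have hux : u < x := lt_of_not_ge fun hxu => (hsep.lt hf hu.symm hux').not_ge (hcol ▸ hf hxu)
  have hxx'sb : SameBlock P x x' := (hnc u x x' y hux hxx' hx'y hu.symm hy).symm.trans hu.symm
  exact hsep x x' hxx'.ne hxx'sb hcol

theorem color_mem_Ioo (hsep : SeparatesColors P f) (hf : Monotone f) (hx : x ∈ innerPoints P) :
    (f x : ℕ) ∈ Ioo 0 (k - 1) := by
  obtain ⟨⟨u, hu, hux⟩, ⟨v, hv, hxv⟩⟩ := mem_innerPoints.1 hx
  have h1 := hsep.lt hf hu.symm hux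
  have h2 := hsep.lt hf hv hxv
  have := (f v).isLt
  simp only [mem_Ioo, Fin.lt_def] at h1 h2 ⊢
  omega

theorem injOn_color_innerPoints (hnc : IsNonCrossing P) (hsep : SeparatesColors P f)
    (hf : Monotone f) : Set.InjOn (fun x => (f x : ℕ)) (innerPoints P) := by
  have key : ∀ {x x'}, x ∈ innerPoints P → x' ∈ innerPoints P → f x = f x' → ¬ x < x' :=
    fun hx hx' hcol hxx' =>
      let ⟨_, ⟨y, hy, hxy⟩⟩ := mem_innerPoints.1 hx
      let ⟨⟨u, hu, hux'⟩, _⟩ := mem_innerPoints.1 hx'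
      hnc.false_of_sameBlock_gt_of_sameBlock_lt hsep hf hxx' hcol hy hxy hu hux'
  intro x hx x' hx' hcol
  have hcol : f x = f x' := Fin.ext hcol
  exact le_antisymm (not_lt.1 (key hx' hx hcol.symm)) (not_lt.1 (key hx hx' hcol))

theorem card_innerPoints_le (hnc : IsNonCrossing P) (hsep : SeparatesColors P f)
    (hf : Monotone f) : #(innerPoints P) ≤ k - 2 := by
  have := card_le_card_of_injOn _ (fun x hx => color_mem_Ioo hsep hf hx)
    (injOn_color_innerPoints hnc hsep hf)
  rwa [Nat.card_Ioo, Nat.sub_sub] at this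

end Coloring

theorem Finset.card_le_card_filter_add_two {α : Type*} [LinearOrder α] (s : Finset α)
    (p : α → Prop) [DecidablePred p]
    (hp : ∀ x ∈ s, (∃ u ∈ s, u < x) → (∃ v ∈ s, x < v) → p x) : #s ≤ #(s.filter p) + 2 := by
  rcases s.eq_empty_or_nonempty with rfl | hs
  · simp
  have hsub : s ⊆ insert (s.min' hs) (insert (s.max' hs) (s.filter p)) := by
    intro x hx
    simp only [mem_insert, mem_filter]
    by_cases hmin : x = s.min' hs
    · exact Or.inl hmin
    by_cases hmax : x = s.max' hs
    · exact Or.inr (Or.inl hmax)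
    exact Or.inr (Or.inr ⟨hx, hp x hx ⟨_, s.min'_mem hs, (s.min'_le x hx).lt_of_ne' hmin⟩
      ⟨_, s.max'_mem hs, (s.le_max' x hx).lt_of_ne hmax⟩⟩)
  grw [card_le_card hsub, card_insert_le, card_insert_le]

section NonPairBlocks

variable {P : Finpartition (univ : Finset (Fin n))} {b : Finset (Fin n)}

theorem card_le_two_mul_card_filter_mem_innerPoints (hb : b ∈ P.parts) (h4 : 4 ≤ #b) :
    #b ≤ 2 * #(b.filter (· ∈ innerPoints P)) := by
  have := b.card_le_card_filter_add_two (· ∈ innerPoints P) fun x hx ⟨u, hu, hux⟩ ⟨v, hv, hxv⟩ =>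
    mem_innerPoints.2 ⟨⟨u, ⟨b, hb, hx, hu⟩, hux⟩, ⟨v, ⟨b, hb, hx, hv⟩, hxv⟩⟩
  omega

theorem card_filter_mem_nonPair_le (heven : ∀ b ∈ P.parts, Even b.card) :
    #(univ.filter fun x => ∃ b ∈ P.parts, x ∈ b ∧ #b ≠ 2) ≤ 2 * #(innerPoints P) := by
  set B := P.parts.filter fun b => #b ≠ 2
  have hdisj : ∀ t : Finset (Fin n) → Finset (Fin n), (∀ b, t b ⊆ b) →
      (B : Set (Finset (Fin n))).PairwiseDisjoint t := fun t ht b hb c hc hbc =>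
    (P.disjoint (filter_subset _ _ hb) (filter_subset _ _ hc) hbc).mono (ht b) (ht c)
  have hX : (univ.filter fun x => ∃ b ∈ P.parts, x ∈ b ∧ #b ≠ 2) = B.biUnion id := by
    ext x
    simp only [mem_filter, mem_univ, true_and, mem_biUnion, id, B]
    exact ⟨fun ⟨b, hb, hx, h2⟩ => ⟨b, ⟨hb, h2⟩, hx⟩, fun ⟨b, ⟨hb, h2⟩, hx⟩ => ⟨b, hb, hx, h2⟩⟩
  calc #(univ.filter fun x => ∃ b ∈ P.parts, x ∈ b ∧ #b ≠ 2)
      = ∑ b ∈ B, #b := by rw [hX, card_biUnion (hdisj id fun _ => subset_rfl)]; rfl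
    _ ≤ ∑ b ∈ B, 2 * #(b.filter (· ∈ innerPoints P)) := by
      refine sum_le_sum fun b hB => ?_
      obtain ⟨hb, h2⟩ := mem_filter.1 hB
      obtain ⟨m, hm⟩ := heven b hb
      have := (P.nonempty_of_mem_parts hb).card_pos
      exact card_le_two_mul_card_filter_mem_innerPoints hb (by omega)
    _ = 2 * #(B.biUnion fun b => b.filter (· ∈ innerPoints P)) := by
      rw [← mul_sum, card_biUnion (hdisj _ fun _ => filter_subset _ _)]
    _ ≤ 2 * #(innerPoints P) := by
      gcongr
      exact biUnion_subset.2 fun b _ x hx => (mem_filter.1 hx).2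

end NonPairBlocks

section Fiber

variable {π π' σ : Finpartition (univ : Finset (Fin n))} {x y y' : Fin n}

theorem QEq.sameBlock_iff (hq : QEq π σ) (hxy : x < y) :
    SameBlock σ x y ↔ IsBlockSucc π x y ∧ Even (blockRank π x) := by
  rw [hq x y hxy, IsBlockSucc]
  exact ⟨fun ⟨h1, h2, h3⟩ => ⟨⟨h1, hxy, h2⟩, h3⟩, fun ⟨⟨h1, _, h2⟩, h3⟩ => ⟨h1, h2, h3⟩⟩

theorem QEq.sameBlock (hq : QEq π σ) (h : SameBlock σ x y) : SameBlock π x y := by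
  rcases lt_trichotomy x y with hxy | rfl | hyx
  · exact ((hq.sameBlock_iff hxy).1 h).1.1
  · exact SameBlock.refl π x
  · exact ((hq.sameBlock_iff hyx).1 h.symm).1.1.symm

theorem QEq.even_blockRank_iff (hq : QEq π σ) (heven : ∀ b ∈ π.parts, Even b.card) :
    Even (blockRank π x) ↔ ∃ y, x < y ∧ SameBlock σ x y := by
  refine ⟨fun h => ?_, fun ⟨y, hxy, h⟩ => ((hq.sameBlock_iff hxy).1 h).2⟩
  obtain ⟨v, hv, hxv⟩ := exists_sameBlock_gt_of_even_blockRank heven h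
  obtain ⟨y, hy⟩ := exists_isBlockSucc_of_sameBlock_of_lt hv hxv
  exact ⟨y, hy.2.1, (hq.sameBlock_iff hy.2.1).2 ⟨hy, h⟩⟩

theorem QEq.even_blockRank_iff_even_blockRank (hq : QEq π σ) (hq' : QEq π' σ)
    (heven : ∀ b ∈ π.parts, Even b.card) (heven' : ∀ b ∈ π'.parts, Even b.card) :
    Even (blockRank π x) ↔ Even (blockRank π' x) := by
  rw [hq.even_blockRank_iff heven, hq'.even_blockRank_iff heven']

/-- Read as brackets, inner points of odd rank open and inner points of even rank close, and a
point of odd rank is matched with its successor; matchings of brackets are unique. -/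
theorem IsBlockSucc.le_of_innerPoints_eq (hnc : IsNonCrossing π)
    (heven : ∀ b ∈ π.parts, Even b.card) (hq : QEq π σ) (hnc' : IsNonCrossing π')
    (heven' : ∀ b ∈ π'.parts, Even b.card) (hq' : QEq π' σ)
    (hD : innerPoints π = innerPoints π') (hy : IsBlockSucc π x y) (hx : Odd (blockRank π x))
    (hy' : IsBlockSucc π' x y') : y' ≤ y := by
  induction y using WellFoundedLT.induction generalizing x y' with
  | _ y ih =>
  by_contra! hyy'
  have hparity {z : Fin n} : Even (blockRank π z) ↔ Even (blockRank π' z) :=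
    hq.even_blockRank_iff_even_blockRank hq' heven heven'
  have hyeven : Even (blockRank π y) := by rw [hy.blockRank_eq]; exact hx.add_one
  have hyD : y ∈ innerPoints π' := hD ▸ mem_innerPoints.2
    ⟨⟨x, hy.1.symm, hy.2.1⟩, exists_sameBlock_gt_of_even_blockRank heven hyeven⟩
  obtain ⟨⟨u, hu, huy⟩, -⟩ := mem_innerPoints.1 hyD
  obtain ⟨e, he⟩ := exists_isBlockSucc_of_sameBlock_of_gt hu huy
  have heodd' : Odd (blockRank π' e) := by
    have := hparity.1 hyeven
    rwa [he.blockRank_eq, Nat.even_add_one, Nat.not_even_iff_odd] at this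
  have heodd : Odd (blockRank π e) := by
    rwa [← Nat.not_even_iff_odd, hparity, Nat.not_even_iff_odd]
  have hxe : x < e := (hnc'.lt_and_lt_of_isBlockSucc hy' hy.2.1 hyy' he.1.symm).1
  have heD : e ∈ innerPoints π := hD ▸ mem_innerPoints.2
    ⟨blockRank_pos_iff.1 heodd'.pos, y, he.1, he.2.1⟩
  obtain ⟨-, ⟨v, hv, hev⟩⟩ := mem_innerPoints.1 heD
  obtain ⟨z, hz⟩ := exists_isBlockSucc_of_sameBlock_of_lt hv hev
  have hzy : z < y := (hnc.lt_and_lt_of_isBlockSucc hy hxe he.2.1 hz.1).2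
  exact (ih z hzy hz heodd he).not_gt hzy

theorem IsBlockSucc.sameBlock_of_innerPoints_eq (hnc : IsNonCrossing π)
    (heven : ∀ b ∈ π.parts, Even b.card) (hq : QEq π σ) (hnc' : IsNonCrossing π')
    (heven' : ∀ b ∈ π'.parts, Even b.card) (hq' : QEq π' σ)
    (hD : innerPoints π = innerPoints π') (hy : IsBlockSucc π x y) : SameBlock π' x y := by
  by_cases hx : Even (blockRank π x)
  · exact hq'.sameBlock ((hq.sameBlock_iff hy.2.1).2 ⟨hy, hx⟩)
  rw [Nat.not_even_iff_odd] at hx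
  have hx' : Odd (blockRank π' x) := by
    rwa [← Nat.not_even_iff_odd, ← hq.even_blockRank_iff_even_blockRank hq' heven heven',
      Nat.not_even_iff_odd]
  have hxD : x ∈ innerPoints π' :=
    hD ▸ mem_innerPoints.2 ⟨blockRank_pos_iff.1 hx.pos, y, hy.1, hy.2.1⟩
  obtain ⟨-, ⟨v, hv, hxv⟩⟩ := mem_innerPoints.1 hxD
  obtain ⟨y', hy'⟩ := exists_isBlockSucc_of_sameBlock_of_lt hv hxv
  obtain rfl : y = y' :=
    le_antisymm (hy'.le_of_innerPoints_eq hnc' heven' hq' hnc heven hq hD.symm hx' hy)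
      (hy.le_of_innerPoints_eq hnc heven hq hnc' heven' hq' hD hx hy')
  exact hy'.1

theorem sameBlock_of_innerPoints_eq (hnc : IsNonCrossing π)
    (heven : ∀ b ∈ π.parts, Even b.card) (hq : QEq π σ) (hnc' : IsNonCrossing π')
    (heven' : ∀ b ∈ π'.parts, Even b.card) (hq' : QEq π' σ)
    (hD : innerPoints π = innerPoints π') (h : SameBlock π x y) : SameBlock π' x y := by
  wlog hxy : x ≤ y generalizing x y
  · exact (this h.symm (le_of_not_ge hxy)).symm
  induction y using WellFoundedLT.induction generalizing x with
  | _ y ih =>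
  rcases hxy.lt_or_eq with hxy | rfl
  · obtain ⟨e, he⟩ := exists_isBlockSucc_of_sameBlock_of_gt h.symm hxy
    exact (ih e he.2.1 (h.trans he.1.symm) (he.le_of_sameBlock h.symm hxy)).trans
      (he.sameBlock_of_innerPoints_eq hnc heven hq hnc' heven' hq' hD)
  · exact SameBlock.refl π' x

theorem eq_of_innerPoints_eq (hnc : IsNonCrossing π)
    (heven : ∀ b ∈ π.parts, Even b.card) (hq : QEq π σ) (hnc' : IsNonCrossing π')
    (heven' : ∀ b ∈ π'.parts, Even b.card) (hq' : QEq π' σ)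
    (hD : innerPoints π = innerPoints π') : π = π' :=
  Finpartition.eq_of_sameBlock_iff fun _ _ =>
    ⟨sameBlock_of_innerPoints_eq hnc heven hq hnc' heven' hq' hD,
      sameBlock_of_innerPoints_eq hnc' heven' hq' hnc heven hq hD.symm⟩

end Fiber

section Signature

variable {π π' σ : Finpartition (univ : Finset (Fin n))} {f : Fin n → Fin k} {x x' : Fin n}

theorem false_of_lt_of_color_eq_of_mem_innerPoints (hf : Monotone f) (hnc : IsNonCrossing π)
    (heven : ∀ b ∈ π.parts, Even b.card) (hsep : SeparatesColors π f) (hq : QEq π σ)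
    (hnc' : IsNonCrossing π') (heven' : ∀ b ∈ π'.parts, Even b.card)
    (hsep' : SeparatesColors π' f) (hq' : QEq π' σ)
    (hx : x ∈ innerPoints π) (hx' : x' ∈ innerPoints π') (hcol : f x = f x')
    (hside : Even (blockRank π x) ↔ Even (blockRank π' x')) (hxx' : x < x') : False := by
  have hparity {z : Fin n} : Even (blockRank π z) ↔ Even (blockRank π' z) :=
    hq.even_blockRank_iff_even_blockRank hq' heven heven'
  by_cases hxeven : Even (blockRank π x)
  · obtain ⟨y, hy, hxy⟩ := exists_sameBlock_gt_of_even_blockRank heven' (hparity.1 hxeven)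
    obtain ⟨⟨u, hu, hux'⟩, -⟩ := mem_innerPoints.1 hx'
    exact hnc'.false_of_sameBlock_gt_of_sameBlock_lt hsep' hf hxx' hcol hy hxy hu hux'
  · have hx'odd : Odd (blockRank π x') := by
      rw [← Nat.not_even_iff_odd, hparity, ← hside]
      exact hxeven
    obtain ⟨u, hu, hux'⟩ := blockRank_pos_iff.1 hx'odd.pos
    obtain ⟨-, ⟨y, hy, hxy⟩⟩ := mem_innerPoints.1 hx
    exact hnc.false_of_sameBlock_gt_of_sameBlock_lt hsep hf hxx' hcol hy hxy hu hux'

noncomputable def signature (f : Fin n → Fin k) (P : Finpartition (univ : Finset (Fin n))) :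
    Finset (ℕ × Bool) :=
  (innerPoints P).image fun x => ((f x : ℕ), decide (Even (blockRank P x)))

theorem signature_subset (hsep : SeparatesColors π f) (hf : Monotone f) :
    signature f π ⊆ Ioo 0 (k - 1) ×ˢ univ := by
  intro c hc
  obtain ⟨x, hx, rfl⟩ := mem_image.1 hc
  exact mem_product.2 ⟨color_mem_Ioo hsep hf hx, mem_univ _⟩

theorem innerPoints_subset_of_signature_eq (hf : Monotone f) (hnc : IsNonCrossing π)
    (heven : ∀ b ∈ π.parts, Even b.card) (hsep : SeparatesColors π f) (hq : QEq π σ)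
    (hnc' : IsNonCrossing π') (heven' : ∀ b ∈ π'.parts, Even b.card)
    (hsep' : SeparatesColors π' f) (hq' : QEq π' σ) (h : signature f π = signature f π') :
    innerPoints π ⊆ innerPoints π' := by
  intro x hx
  have hmem : ((f x : ℕ), decide (Even (blockRank π x))) ∈ signature f π' :=
    h ▸ mem_image_of_mem _ hx
  obtain ⟨x', hx', hsig⟩ := mem_image.1 hmem
  simp only [Prod.mk.injEq, decide_eq_decide] at hsig
  have hcol : f x = f x' := Fin.ext hsig.1.symm
  have hside := hsig.2.symm
  obtain rfl : x = x' := le_antisymm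
    (not_lt.1 fun h => false_of_lt_of_color_eq_of_mem_innerPoints hf hnc' heven' hsep' hq'
      hnc heven hsep hq hx' hx hcol.symm hside.symm h)
    (not_lt.1 fun h => false_of_lt_of_color_eq_of_mem_innerPoints hf hnc heven hsep hq
      hnc' heven' hsep' hq' hx hx' hcol hside h)
  exact hx'

theorem eq_of_signature_eq (hf : Monotone f) (hnc : IsNonCrossing π)
    (heven : ∀ b ∈ π.parts, Even b.card) (hsep : SeparatesColors π f) (hq : QEq π σ)
    (hnc' : IsNonCrossing π') (heven' : ∀ b ∈ π'.parts, Even b.card)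
    (hsep' : SeparatesColors π' f) (hq' : QEq π' σ) (h : signature f π = signature f π') :
    π = π' :=
  eq_of_innerPoints_eq hnc heven hq hnc' heven' hq' <|
    (innerPoints_subset_of_signature_eq hf hnc heven hsep hq hnc' heven' hsep' hq' h).antisymm
      (innerPoints_subset_of_signature_eq hf hnc' heven' hsep' hq' hnc heven hsep hq h.symm)

end Signature

theorem fiber_of_Q_bound_general (N k : ℕ)
    (f : Fin (2 * N) → Fin k) (hfmono : Monotone f)
    (σ : Finpartition (Finset.univ : Finset (Fin (2 * N)))) :
    Nat.card {π : Finpartition (Finset.univ : Finset (Fin (2 * N))) //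
        IsNonCrossing π ∧ (∀ b ∈ π.parts, Even b.card) ∧
        (∀ i j : Fin (2 * N), i ≠ j → SameBlock π i j → f i ≠ f j) ∧
        QEq π σ} ≤ 4 ^ (k - 2) ∧
      ∀ π : Finpartition (Finset.univ : Finset (Fin (2 * N))),
        IsNonCrossing π → (∀ b ∈ π.parts, Even b.card) →
        (∀ i j : Fin (2 * N), i ≠ j → SameBlock π i j → f i ≠ f j) →
        QEq π σ →
        (Finset.univ.filter (fun x : Fin (2 * N) =>
            ∃ b ∈ π.parts, x ∈ b ∧ b.card ≠ 2)).card ≤ 2 * k - 4 := by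
  refine ⟨?_, fun π hnc heven hsep _ => ?_⟩
  · let S := (Ioo 0 (k - 1) ×ˢ (univ : Finset Bool)).powerset
    have hinj : Function.Injective fun π : {π : Finpartition (univ : Finset (Fin (2 * N))) //
        IsNonCrossing π ∧ (∀ b ∈ π.parts, Even b.card) ∧ SeparatesColors π f ∧ QEq π σ} =>
        (⟨signature f π.1, mem_powerset.2 (signature_subset π.2.2.2.1 hfmono)⟩ : S) := by
      rintro ⟨π, hnc, heven, hsep, hq⟩ ⟨π', hnc', heven', hsep', hq'⟩ h
      exact Subtype.ext <| eq_of_signature_eq hfmono hnc heven hsep hq hnc' heven' hsep' hq'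
        (congrArg Subtype.val h)
    calc _ ≤ Nat.card S := Nat.card_le_card_of_injective _ hinj
      _ = 4 ^ (k - 2) := by
        rw [Nat.card_eq_finsetCard, card_powerset, card_product, Nat.card_Ioo, card_univ,
          Fintype.card_bool, pow_mul']
        norm_num [Nat.sub_sub]
  · have := card_innerPoints_le hnc hsep hfmono
    have := card_filter_mem_nonPair_le heven
    omega

/-- Suppose `[2N]` is divided into `k ≥ 2` non-empty consecutive intervals (given by a
monotone surjection `f` onto `Fin k`), and `σ` is a non-crossing pair partition whose
pairs never connect two elements of a same interval.  Then at most `4^{k−2}`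
non-crossing partitions `π` of `[2N]` with blocks of even size, connecting no two
elements of a same interval, satisfy `Q(π) = σ`; and for each such `π` at most
`2k − 4` elements lie in a block of `π` that is not a pair. -/
theorem fiber_of_Q_bound (N k : ℕ) (hN : 0 < N) (hk : 2 ≤ k)
    (f : Fin (2 * N) → Fin k) (hfmono : Monotone f) (hfsurj : Function.Surjective f)
    (σ : Finpartition (Finset.univ : Finset (Fin (2 * N))))
    (hσnc : IsNonCrossing σ) (hσpair : ∀ b ∈ σ.parts, b.card = 2)
    (hσint : ∀ i j : Fin (2 * N), i ≠ j → SameBlock σ i j → f i ≠ f j) :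
    Nat.card {π : Finpartition (Finset.univ : Finset (Fin (2 * N))) //
        IsNonCrossing π ∧ (∀ b ∈ π.parts, Even b.card) ∧
        (∀ i j : Fin (2 * N), i ≠ j → SameBlock π i j → f i ≠ f j) ∧
        QEq π σ} ≤ 4 ^ (k - 2) ∧
      ∀ π : Finpartition (Finset.univ : Finset (Fin (2 * N))),
        IsNonCrossing π → (∀ b ∈ π.parts, Even b.card) →
        (∀ i j : Fin (2 * N), i ≠ j → SameBlock π i j → f i ≠ f j) →
        QEq π σ →
        (Finset.univ.filter (fun x : Fin (2 * N) =>
            ∃ b ∈ π.parts, x ∈ b ∧ b.card ≠ 2)).card ≤ 2 * k - 4 :=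
  fiber_of_Q_bound_general N k f hfmono σ
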